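/- arXiv:0906.4111 — 2 statements merged into one kernel-verified Lean document; each statement's English description precedes it below -/
import Mathlib

section
/- Let F be the face lattice (boundary simplicial complex) of a simplicial d-polytope, viewed as a simplicial complex triangulating the sphere S^{d-1}. Then no proper subcomplex of F with the same vertex set is the boundary complex of a simplicial d-polytope. -/
/-!
Both complexes have as space the frontier of the same convex hull, so every point of a face `s`
of `K` lies in some face `t` of `L ⊆ K`. Taking the centroid of `s`, which lies in the convex hull
of `s ∩ t` and hence in its affine span, affine independence of `s` forces `s ⊆ t`, so `s ∈ L`.
-/

open Geometry Finset

theorem AffineIndependent.subset_of_centroid_mem_affineSpan {k V P : Type*} [DivisionRing k]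
    [CharZero k] [AddCommGroup V] [Module k V] [AddTorsor V P] {s u : Finset P}
    (hs : AffineIndependent k ((↑) : s → P)) (hu : u ⊆ s)
    (h : s.centroid k id ∈ affineSpan k (u : Set P)) : s ⊆ u := by
  have himage : ((↑) : s → P) '' {i | (i : P) ∈ u} = u := by
    ext x
    exact ⟨by rintro ⟨i, hi, rfl⟩; exact hi, fun hx => ⟨⟨x, hu hx⟩, hx, rfl⟩⟩
  intro x hx
  by_contra hxu
  have hw := hs.eq_zero_of_affineCombination_mem_affineSpan
    (sum_centroidWeights_eq_one_of_nonempty k _ ⟨⟨x, hx⟩, mem_univ _⟩)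
    (by rwa [himage, ← centroid_def, centroid_univ]) (mem_univ ⟨x, hx⟩) hxu
  simp only [centroidWeights_apply, card_univ, Fintype.card_coe, inv_eq_zero,
    Nat.cast_eq_zero] at hw
  exact card_ne_zero_of_mem hx hw

theorem Geometry.SimplicialComplex.faces_eq_of_faces_subset_of_space_eq {𝕜 E : Type*} [Field 𝕜]
    [LinearOrder 𝕜] [IsStrictOrderedRing 𝕜] [AddCommGroup E] [Module 𝕜 E]
    {K L : SimplicialComplex 𝕜 E} (hsub : L.faces ⊆ K.faces) (hspace : L.space = K.space) :
    L.faces = K.faces := by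
  classical
  refine hsub.antisymm fun s hsK => ?_
  have hne : s.Nonempty := nonempty_iff_ne_empty.2 fun h => K.empty_notMem (h ▸ hsK)
  have hcK : s.centroid 𝕜 id ∈ K.space :=
    K.convexHull_subset_space hsK (s.centroid_mem_convexHull hne)
  obtain ⟨t, htL, hct⟩ := L.mem_space_iff.1 (hspace ▸ hcK)
  have hcst : s.centroid 𝕜 id ∈ convexHull 𝕜 ((s ∩ t : Finset E) : Set E) := by
    simpa using K.inter_subset_convexHull hsK (hsub htL) ⟨s.centroid_mem_convexHull hne, hct⟩
  have hst : s ⊆ s ∩ t := (K.indep hsK).subset_of_centroid_mem_affineSpan inter_subset_left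
    (convexHull_subset_affineSpan _ hcst)
  exact L.down_closed htL (hst.trans inter_subset_right) hne

theorem stmt_17_general {d : ℕ}
    (K L : SimplicialComplex ℝ (EuclideanSpace ℝ (Fin d)))
    (hKspace : K.space = frontier (convexHull ℝ K.vertices))
    (hsub : L.faces ⊆ K.faces)
    (hvert : L.vertices = K.vertices)
    (hLspace : L.space = frontier (convexHull ℝ L.vertices)) :
    L.faces = K.faces :=
  SimplicialComplex.faces_eq_of_faces_subset_of_space_eq hsub (by rw [hKspace, hLspace, hvert])

/-- Lemma 7.9 (esm): if K is the boundary complex of a simplicial d-polytope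
(its space is the frontier of the convex hull of its vertices, which has
nonempty interior), then no proper subcomplex of K on the same vertex set is
itself the boundary complex of a simplicial d-polytope. -/
theorem stmt_17 {d : ℕ}
    (K L : SimplicialComplex ℝ (EuclideanSpace ℝ (Fin d)))
    (hKspace : K.space = frontier (convexHull ℝ K.vertices))
    (hKint : (interior (convexHull ℝ K.vertices)).Nonempty)
    (hsub : L.faces ⊆ K.faces)
    (hvert : L.vertices = K.vertices)
    (hLspace : L.space = frontier (convexHull ℝ L.vertices))
    (hLint : (interior (convexHull ℝ L.vertices)).Nonempty) :
    L.faces = K.faces :=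
  stmt_17_general K L hKspace hsub hvert hLspace
end

section
/- Let A be an (n×n) real symmetric matrix of the block form where A is the Gram matrix of a graph consisting of subgraphs Σ₁,…,Σ_l having a unique common vertex v and no edges between Σ_i \ {v} and Σ_j \ {v} for i ≠ j, with all diagonal entries 1. Define det(Σ, v) = det(A)/det(A_v) where A_v is A with the row and column of v deleted (assuming det(A_v) ≠ 0, and likewise for each Σᵢ). Then det(Σ, v) = Σᵢ det(Σᵢ, v) - (l - 1). -/
/-!
With the diagonal entry at `v` equal to `1`, the local determinant is the Schur complement
`det(Σ, v) = 1 - bᵀ D⁻¹ b`, where `D` is the Gram matrix of `Σ \ v` and `b` the column of `v`.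
For a wedge, `D` is block diagonal with the blocks of the `Σᵢ \ v`, so `D⁻¹` is block diagonal
too and `bᵀ D⁻¹ b = ∑ᵢ qᵢ` with `det(Σᵢ, v) = 1 - qᵢ`. Hence
`det(Σ, v) = 1 - ∑ᵢ qᵢ = ∑ᵢ det(Σᵢ, v) - (l - 1)`.
-/

open Matrix

namespace Matrix

variable {K : Type*} [Field K]

theorem det_div_det_toBlocks₂₂ {m : Type*} [Fintype m] [DecidableEq m]
    (M : Matrix (Unit ⊕ m) (Unit ⊕ m) K) (hM : M.toBlocks₂₂.det ≠ 0) :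
    M.det / M.toBlocks₂₂.det
      = M (.inl ()) (.inl ()) - (M.toBlocks₁₂ * M.toBlocks₂₂⁻¹ * M.toBlocks₂₁) () () := by
  have : Invertible M.toBlocks₂₂ := invertibleOfIsUnitDet _ hM.isUnit
  have hdet := det_fromBlocks₂₂ M.toBlocks₁₁ M.toBlocks₁₂ M.toBlocks₂₁ M.toBlocks₂₂
  rw [fromBlocks_toBlocks, invOf_eq_nonsing_inv] at hdet
  rw [hdet, mul_div_cancel_left₀ _ hM, det_unique]
  rfl

theorem inv_blockDiagonal' {o : Type*} {n : o → Type*} [Fintype o] [DecidableEq o]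
    [∀ i, Fintype (n i)] [∀ i, DecidableEq (n i)] (M : ∀ i, Matrix (n i) (n i) K)
    (hM : ∀ i, (M i).det ≠ 0) :
    (blockDiagonal' M)⁻¹ = blockDiagonal' fun i => (M i)⁻¹ := by
  refine inv_eq_right_inv ?_
  simp only [← blockDiagonal'_mul, mul_nonsing_inv _ (hM _).isUnit]
  exact blockDiagonal'_one

theorem mul_blockDiagonal'_mul {α : Type*} [NonUnitalNonAssocSemiring α]
    {l r o : Type*} {n : o → Type*} [Fintype o] [DecidableEq o] [∀ i, Fintype (n i)]
    (B : Matrix l (Σ i, n i) α) (N : ∀ i, Matrix (n i) (n i) α) (C : Matrix (Σ i, n i) r α) :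
    B * blockDiagonal' N * C
      = ∑ i, B.submatrix id (Sigma.mk i) * N i * C.submatrix (Sigma.mk i) id := by
  ext x y
  simp [mul_apply, Matrix.sum_apply, Fintype.sum_sigma, blockDiagonal'_apply, Finset.sum_mul]

end Matrix

theorem stmt_18_general {l : ℕ} {α : Fin l → Type*}
    [∀ i, Fintype (α i)] [∀ i, DecidableEq (α i)]
    (A : Matrix (Unit ⊕ Σ i, α i) (Unit ⊕ Σ i, α i) ℝ)
    (hdiag : ∀ x, A x x = 1)
    (hblock : ∀ i j, i ≠ j → ∀ (a : α i) (b : α j),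
      A (Sum.inr ⟨i, a⟩) (Sum.inr ⟨j, b⟩) = 0)
    (hAv : (Matrix.of fun a b : Σ i, α i => A (Sum.inr a) (Sum.inr b)).det ≠ 0)
    (hCi : ∀ i, (Matrix.of fun a b : α i => A (Sum.inr ⟨i, a⟩) (Sum.inr ⟨i, b⟩)).det ≠ 0) :
    A.det / (Matrix.of fun a b : Σ i, α i => A (Sum.inr a) (Sum.inr b)).det
      = (∑ i,
          (Matrix.of fun x y : Unit ⊕ α i =>
            A (Sum.map id (Sigma.mk i) x) (Sum.map id (Sigma.mk i) y)).det
          / (Matrix.of fun a b : α i => A (Sum.inr ⟨i, a⟩) (Sum.inr ⟨i, b⟩)).det)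
        - ((l : ℝ) - 1) := by
  set C : ∀ i, Matrix (α i) (α i) ℝ := fun i => of fun a b => A (.inr ⟨i, a⟩) (.inr ⟨i, b⟩)
  set q : Fin l → ℝ := fun i =>
    (A.toBlocks₁₂.submatrix id (Sigma.mk i) * (C i)⁻¹ * A.toBlocks₂₁.submatrix (Sigma.mk i) id) () ()
  have hD : A.toBlocks₂₂ = blockDiagonal' C := by
    ext ⟨i, a⟩ ⟨j, b⟩
    by_cases hij : i = j
    · subst hij
      rw [blockDiagonal'_apply_eq]
      rfl
    · rw [blockDiagonal'_apply_ne _ _ _ hij]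
      exact hblock i j hij a b
  have hglobal : A.det / A.toBlocks₂₂.det = 1 - ∑ i, q i := by
    rw [det_div_det_toBlocks₂₂ A hAv, hdiag, hD, inv_blockDiagonal' C hCi, mul_blockDiagonal'_mul,
      Matrix.sum_apply]
  have hlocal : ∀ i, (of fun x y : Unit ⊕ α i =>
      A (Sum.map id (Sigma.mk i) x) (Sum.map id (Sigma.mk i) y)).det / (C i).det = 1 - q i := by
    intro i
    rw [← hdiag (.inl ())]
    exact det_div_det_toBlocks₂₂ (of fun x y : Unit ⊕ α i =>
      A (Sum.map id (Sigma.mk i) x) (Sum.map id (Sigma.mk i) y)) (hCi i)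
  change A.det / A.toBlocks₂₂.det = _
  rw [hglobal, Finset.sum_congr rfl fun i _ => hlocal i]
  simp only [Finset.sum_sub_distrib, Finset.sum_const, Finset.card_univ, Fintype.card_fin,
    nsmul_eq_mul, mul_one]
  ring

/-- Proposition 3.1 (local determinants): for a symmetric matrix with unit
diagonal which is the Gram matrix of a wedge of diagrams Σ₁,…,Σ_l at a common
vertex v (no entries between distinct parts away from v), the local determinant
det(Σ,v) = det A / det(A with v removed) satisfies
det(Σ,v) = ∑ᵢ det(Σᵢ,v) - (l-1). -/
theorem stmt_18 {l : ℕ} {α : Fin l → Type*}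
    [∀ i, Fintype (α i)] [∀ i, DecidableEq (α i)]
    (A : Matrix (Unit ⊕ Σ i, α i) (Unit ⊕ Σ i, α i) ℝ)
    (hsymm : A.IsSymm) (hdiag : ∀ x, A x x = 1)
    (hblock : ∀ i j, i ≠ j → ∀ (a : α i) (b : α j),
      A (Sum.inr ⟨i, a⟩) (Sum.inr ⟨j, b⟩) = 0)
    (hAv : (Matrix.of fun a b : Σ i, α i => A (Sum.inr a) (Sum.inr b)).det ≠ 0)
    (hCi : ∀ i, (Matrix.of fun a b : α i => A (Sum.inr ⟨i, a⟩) (Sum.inr ⟨i, b⟩)).det ≠ 0) :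
    A.det / (Matrix.of fun a b : Σ i, α i => A (Sum.inr a) (Sum.inr b)).det
      = (∑ i,
          (Matrix.of fun x y : Unit ⊕ α i =>
            A (Sum.map id (Sigma.mk i) x) (Sum.map id (Sigma.mk i) y)).det
          / (Matrix.of fun a b : α i => A (Sum.inr ⟨i, a⟩) (Sum.inr ⟨i, b⟩)).det)
        - ((l : ℝ) - 1) :=
  stmt_18_general A hdiag hblock hAv hCi
end
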